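/- arXiv:math/9811169 — 2 statements merged into one kernel-verified Lean document; each statement's English description precedes it below -/
import Mathlib

section
/- Let $h : \mathbb{R} \to \mathbb{R}^m$ be smooth with $h(-C)=h(C)=0$, and define $H(u) = \frac{1}{8}\int_{-C}^{u} h(s)h'(s)^T ds$. Then the function $\phi^3(u,v) = -\frac{1}{12}(|h(u)|^2 h(u) + |h(v)|^2 h(v)) + (H(u)-H(v))(h(u)-h(v))$ satisfies $\phi^3_{uv}(u,v) = -\frac{1}{8}(h(u)+h(v))\,(h'(u) \cdot h'(v))$, $\phi^3(u,u) = -\frac{1}{6}|h(u)|^2 h(u)$, and $\phi^3(u,v) = \phi^3(v,u)$. -/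
open Matrix

/-- Derivative of `t ↦ (M t).mulVec (w t)` when entries are differentiable. -/
lemma aux_hasDerivAt_mulVec {m : ℕ} {M : ℝ → Matrix (Fin m) (Fin m) ℝ}
    {w : ℝ → Fin m → ℝ} {M' : Matrix (Fin m) (Fin m) ℝ} {w' : Fin m → ℝ} {t : ℝ}
    (hM : ∀ i j, HasDerivAt (fun t => M t i j) (M' i j) t)
    (hw : ∀ j, HasDerivAt (fun t => w t j) (w' j) t) :
    HasDerivAt (fun t => (M t).mulVec (w t)) (M'.mulVec (w t) + (M t).mulVec w') t := by
  rw [hasDerivAt_pi]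
  intro i
  have key : HasDerivAt (fun t => ∑ j, M t i j * w t j)
      (∑ j, (M' i j * w t j + M t i j * w' j)) t :=
    HasDerivAt.fun_sum fun j _ => (hM i j).mul (hw j)
  simpa [Matrix.mulVec, dotProduct, Finset.sum_add_distrib] using key

/-- The explicit third-order term `φ³` and its properties. -/
theorem stmt_10 {m : ℕ} (C : ℝ) (hC : 0 < C) (h : ℝ → (Fin m → ℝ))
    (hsmooth : ContDiff ℝ (⊤ : ℕ∞) h) (hbc : h (-C) = 0 ∧ h C = 0)
    (H : ℝ → Matrix (Fin m) (Fin m) ℝ)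
    (hH : ∀ u, H u = Matrix.of fun i j =>
      (1/8) * ∫ s in (-C)..u, h s i * deriv h s j)
    (φ3 : ℝ → ℝ → (Fin m → ℝ))
    (hφ3 : ∀ u v, φ3 u v =
      (-(1/12) : ℝ) • (dotProduct (h u) (h u) • h u
        + dotProduct (h v) (h v) • h v)
      + (H u - H v).mulVec (h u - h v)) :
    (∀ u v, deriv (fun u' => deriv (fun v' => φ3 u' v') v) u =
      (-(1/8) * dotProduct (deriv h u) (deriv h v)) • (h u + h v)) ∧
    (∀ u, φ3 u u = (-(1/6) * dotProduct (h u) (h u)) • h u) ∧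
    (∀ u v, φ3 u v = φ3 v u) := by
  have hh : Continuous h := hsmooth.continuous
  have hdh : Continuous (deriv h) := hsmooth.continuous_deriv (by simp)
  have hder : ∀ t, HasDerivAt h (deriv h t) t := fun t =>
    ((hsmooth.differentiable (by simp)) t).hasDerivAt
  have hderc : ∀ t j, HasDerivAt (fun t => h t j) (deriv h t j) t := fun t j =>
    hasDerivAt_pi.1 (hder t) j
  -- derivative of entries of H
  have hHd : ∀ (i j : Fin m) (t : ℝ), HasDerivAt (fun u => H u i j)
      ((1/8) * (h t i * deriv h t j)) t := by
    intro i j t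
    have hcont : Continuous fun s => h s i * deriv h s j :=
      ((continuous_apply i).comp hh).mul ((continuous_apply j).comp hdh)
    have := intervalIntegral.integral_hasDerivAt_right
      (f := fun s => h s i * deriv h s j) (a := -C) (b := t)
      (hcont.intervalIntegrable _ _) (hcont.stronglyMeasurableAtFilter _ _)
      hcont.continuousAt
    have h2 := this.const_mul (1/8 : ℝ)
    convert h2 using 2 with u
    case e'_4 => rfl
    case e'_5 => rfl
    rw [hH]; rfl
  -- the matrix appearing as the derivative of H
  set Hd : ℝ → Matrix (Fin m) (Fin m) ℝ :=
    fun t => Matrix.of fun i j => (1/8) * (h t i * deriv h t j) with hHddef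
  -- derivative of the scalar |h v|²
  have hdot : ∀ t, HasDerivAt (fun v => dotProduct (h v) (h v))
      (∑ j, (deriv h t j * h t j + h t j * deriv h t j)) t := by
    intro t
    have : HasDerivAt (fun v => ∑ j, h v j * h v j)
        (∑ j, (deriv h t j * h t j + h t j * deriv h t j)) t :=
      HasDerivAt.fun_sum fun j _ => (hderc t j).mul (hderc t j)
    simpa [dotProduct] using this
  -- the inner derivative
  have hinner : ∀ u v, HasDerivAt (fun v' => φ3 u v')
      ((-(1/12) : ℝ) • ((0 : Fin m → ℝ)
          + (dotProduct (h v) (h v) • deriv h v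
            + (∑ j, (deriv h v j * h v j + h v j * deriv h v j)) • h v))
        + (((0 : Matrix (Fin m) (Fin m) ℝ) - Hd v).mulVec (h u - h v)
          + (H u - H v).mulVec ((0 : Fin m → ℝ) - deriv h v))) v := by
    intro u v
    have h1 : HasDerivAt (fun v' => dotProduct (h u) (h u) • h u
        + dotProduct (h v') (h v') • h v')
        ((0 : Fin m → ℝ) + (dotProduct (h v) (h v) • deriv h v
            + (∑ j, (deriv h v j * h v j + h v j * deriv h v j)) • h v)) v :=
      (hasDerivAt_const _ _).add ((hdot v).smul (hder v))
    have h2 : HasDerivAt (fun v' => (H u - H v').mulVec (h u - h v'))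
        (((0 : Matrix (Fin m) (Fin m) ℝ) - Hd v).mulVec (h u - h v)
          + (H u - H v).mulVec ((0 : Fin m → ℝ) - deriv h v)) v := by
      apply aux_hasDerivAt_mulVec
      · intro i j
        have := (hasDerivAt_const v (H u i j)).fun_sub (hHd i j v)
        simpa [hHddef, Matrix.sub_apply] using this
      · intro j
        have := (hasDerivAt_const v (h u j)).fun_sub (hderc v j)
        simpa using this
    have := (h1.const_smul ((-(1/12)) : ℝ)).add h2
    simp only [hφ3]
    exact this
  refine ⟨?_, ?_, ?_⟩
  · intro u v
    have heq : (fun u' => deriv (fun v' => φ3 u' v') v) = fun u' =>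
        (-(1/12) : ℝ) • ((0 : Fin m → ℝ)
          + (dotProduct (h v) (h v) • deriv h v
            + (∑ j, (deriv h v j * h v j + h v j * deriv h v j)) • h v))
        + (((0 : Matrix (Fin m) (Fin m) ℝ) - Hd v).mulVec (h u' - h v)
          + (H u' - H v).mulVec ((0 : Fin m → ℝ) - deriv h v)) :=
      funext fun u' => (hinner u' v).deriv
    rw [heq]
    have h3 : HasDerivAt (fun u' => ((0 : Matrix (Fin m) (Fin m) ℝ) - Hd v).mulVec (h u' - h v))
        (((0 : Matrix (Fin m) (Fin m) ℝ)).mulVec (h u - h v)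
          + ((0 : Matrix (Fin m) (Fin m) ℝ) - Hd v).mulVec (deriv h u - 0)) u := by
      apply aux_hasDerivAt_mulVec
      · intro i j; simpa using hasDerivAt_const u (((0 : Matrix (Fin m) (Fin m) ℝ) - Hd v) i j)
      · intro j
        have := (hderc u j).fun_sub (hasDerivAt_const u (h v j))
        simpa using this
    have h4 : HasDerivAt (fun u' => (H u' - H v).mulVec ((0 : Fin m → ℝ) - deriv h v))
        ((Hd u - 0).mulVec ((0 : Fin m → ℝ) - deriv h v)
          + (H u - H v).mulVec (0 : Fin m → ℝ)) u := by
      apply aux_hasDerivAt_mulVec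
      · intro i j
        have := (hHd i j u).fun_sub (hasDerivAt_const u (H v i j))
        simpa [hHddef, Matrix.sub_apply] using this
      · intro j; simpa using hasDerivAt_const u (((0 : Fin m → ℝ) - deriv h v) j)
    have htot := ((hasDerivAt_const u ((-(1/12) : ℝ) • ((0 : Fin m → ℝ)
          + (dotProduct (h v) (h v) • deriv h v
            + (∑ j, (deriv h v j * h v j + h v j * deriv h v j)) • h v)))).fun_add
        (h3.fun_add h4)).deriv
    rw [htot]
    funext i
    simp only [Pi.add_apply, Pi.zero_apply, Pi.smul_apply, Pi.sub_apply, smul_eq_mul,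
      Matrix.mulVec, dotProduct, Matrix.sub_apply, Matrix.zero_apply, Matrix.of_apply,
      hHddef, zero_add, dotProduct]
    simp only [mul_zero, zero_mul, Finset.sum_const_zero, add_zero, zero_add]
    rw [Finset.mul_sum, Finset.sum_mul, ← Finset.sum_add_distrib]
    refine Finset.sum_congr rfl fun j _ => by ring
  · intro u
    rw [hφ3]
    funext i
    simp [Matrix.mulVec]
    ring
  · intro u v
    rw [hφ3, hφ3]
    have : (H u - H v).mulVec (h u - h v) = (H v - H u).mulVec (h v - h u) := by
      rw [← neg_sub (H v) (H u), ← neg_sub (h v) (h u), Matrix.neg_mulVec,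
        Matrix.mulVec_neg, neg_neg]
    rw [this]
    funext i
    simp
    ring
end

section
/- Let $A, B : \mathbb{R} \to \mathbb{C}$ be continuous with $A(\xi) = A(0) + O(|\xi|)$ and $B(\xi) = B(0) + O(|\xi|)$ as $\xi \to 0$, and suppose $A(0) = B(0) = c$ with $c \neq 0$. Then there exist constants $\delta > 0$ and $K > 0$ such that for all $T \geq K$, $\int_{K/T}^{\delta} \frac{|e^{-2\pi i T\xi} A(\xi) - e^{2\pi i T \xi} B(-\xi)|^2}{\xi}\, d\xi \geq \frac{1}{2}|c|^2 \log T - K$. -/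
/-!
Write `e^{∓iθ}` with `θ = 2πTξ`. Since `A(ξ) ≈ c ≈ B(-ξ)`, the integrand is
`|(e^{-iθ} - e^{iθ}) c|² = 4|c|² sin² θ` up to an error `O(|c| ξ)`, so after dividing by `ξ` the
error integrates to `O(1)`. Writing `sin² = (1 - cos 2θ)/2`, the main term gives
`2|c|² log (T/K)` from `∫ dξ/ξ`, while the oscillatory part `∫ cos(4πTξ)/ξ` over `[K/T, 1]` is
bounded by integration by parts. Choosing `K` large enough to absorb `log K` and the errors
leaves `½|c|² log T - K`.
-/

open Real Filter MeasureTheory Interval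

lemma exists_mul_log_add_le (α β : ℝ) : ∃ K ≥ 1, α * log K + β ≤ K := by
  have hε : 0 < (2 * (|α| + 1))⁻¹ := by positivity
  obtain ⟨K, hlog, hK1, hKβ⟩ := ((isLittleO_log_id_atTop.bound hε).and
    ((eventually_ge_atTop 1).and (eventually_ge_atTop (2 * β)))).exists
  refine ⟨K, hK1, ?_⟩
  rw [norm_eq_abs, norm_eq_abs, id, abs_of_nonneg (a := K) (by linarith)] at hlog
  have hα : |α| * (2 * (|α| + 1))⁻¹ ≤ 1 / 2 := by
    rw [← div_eq_mul_inv, div_le_iff₀ (by positivity)]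
    linarith
  have : α * log K ≤ K / 2 :=
    calc α * log K ≤ |α| * |log K| := by rw [← abs_mul]; exact le_abs_self _
      _ ≤ |α| * ((2 * (|α| + 1))⁻¹ * K) := by gcongr
      _ ≤ K / 2 := by nlinarith
  linarith

lemma sq_norm_sub_le_sq_norm_add {E : Type*} [SeminormedAddCommGroup E] {z w : E} {M ε : ℝ}
    (hz : ‖z‖ ≤ M) (hw : ‖w‖ ≤ ε) : ‖z‖ ^ 2 - 2 * M * ε ≤ ‖z + w‖ ^ 2 := by
  have h := norm_sub_norm_le z (-w)
  rw [norm_neg, sub_neg_eq_add] at h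
  rcases le_total ‖w‖ ‖z‖ with hwz | hzw
  · nlinarith [norm_nonneg w, norm_nonneg (z + w)]
  · nlinarith [norm_nonneg w, norm_nonneg z, norm_nonneg (z + w)]

lemma norm_exp_neg_mul_I_sub_exp_mul_I (θ : ℝ) :
    ‖Complex.exp (-θ * Complex.I) - Complex.exp (θ * Complex.I)‖ = 2 * |sin θ| := by
  have h := congrArg norm (Complex.two_sin (θ : ℂ))
  simpa [← Complex.ofReal_sin, Complex.norm_real] using h.symm

lemma le_sq_norm_exp_mul_sub_exp_mul (θ ε : ℝ) {c u v : ℂ} (h : ‖u - c‖ + ‖v - c‖ ≤ ε) :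
    4 * ‖c‖ ^ 2 * sin θ ^ 2 - 4 * ‖c‖ * ε ≤
      ‖Complex.exp (-θ * Complex.I) * u - Complex.exp (θ * Complex.I) * v‖ ^ 2 := by
  set e₁ := Complex.exp (-θ * Complex.I)
  set e₂ := Complex.exp (θ * Complex.I)
  have he₁ : ‖e₁‖ = 1 := by
    simpa only [Complex.ofReal_neg] using Complex.norm_exp_ofReal_mul_I (-θ)
  have he₂ : ‖e₂‖ = 1 := Complex.norm_exp_ofReal_mul_I θ
  have hz : ‖(e₁ - e₂) * c‖ = 2 * |sin θ| * ‖c‖ := by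
    rw [norm_mul, norm_exp_neg_mul_I_sub_exp_mul_I]
  have hzM : ‖(e₁ - e₂) * c‖ ≤ 2 * ‖c‖ := by
    rw [hz]
    nlinarith [abs_sin_le_one θ, norm_nonneg c]
  have hw : ‖e₁ * (u - c) - e₂ * (v - c)‖ ≤ ε :=
    calc _ ≤ ‖e₁ * (u - c)‖ + ‖e₂ * (v - c)‖ := norm_sub_le _ _
      _ = ‖u - c‖ + ‖v - c‖ := by rw [norm_mul, norm_mul, he₁, he₂, one_mul, one_mul]
      _ ≤ ε := h
  have key := sq_norm_sub_le_sq_norm_add hzM hw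
  rw [show (e₁ - e₂) * c + (e₁ * (u - c) - e₂ * (v - c)) = e₁ * u - e₂ * v by ring, hz] at key
  nlinarith [sq_abs (sin θ)]

section PositiveInterval

variable {a b : ℝ}

lemma pos_of_mem_uIcc (ha : 0 < a) (hb : 0 < b) {x : ℝ} (hx : x ∈ [[a, b]]) : 0 < x :=
  (lt_min ha hb).trans_le hx.1

lemma intervalIntegrable_div_of_pos {f : ℝ → ℝ} (hf : Continuous f) (ha : 0 < a) (hb : 0 < b) :
    IntervalIntegrable (fun x => f x / x) volume a b :=
  (hf.continuousOn.div continuousOn_id fun _ hx =>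
    (pos_of_mem_uIcc ha hb hx).ne').intervalIntegrable

lemma integral_sin_sq_mul_div (ha : 0 < a) (hb : 0 < b) (l : ℝ) :
    ∫ x in a..b, sin (l * x) ^ 2 / x =
      log (b / a) / 2 - (∫ x in a..b, cos (2 * l * x) / x) / 2 := by
  have hsq : (fun x => sin (l * x) ^ 2 / x) = fun x => x⁻¹ / 2 - cos (2 * l * x) / x / 2 := by
    funext x
    rw [sin_sq_eq_half_sub, ← mul_assoc]
    ring
  have hinv : IntervalIntegrable (fun x : ℝ => x⁻¹) volume a b :=
    intervalIntegral.intervalIntegrable_inv (fun _ hx => (pos_of_mem_uIcc ha hb hx).ne')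
      continuousOn_id
  rw [hsq, intervalIntegral.integral_sub (hinv.div_const 2)
      ((intervalIntegrable_div_of_pos (by fun_prop) ha hb).div_const 2),
    intervalIntegral.integral_div, intervalIntegral.integral_div, integral_inv_of_pos ha hb]

lemma abs_integral_cos_mul_div_le (ha : 0 < a) (hab : a ≤ b) {l : ℝ} (hl : 0 < l) :
    |∫ x in a..b, cos (l * x) / x| ≤ 2 / (l * a) := by
  have hb : 0 < b := ha.trans_le hab
  have hu : ∀ x ∈ [[a, b]], HasDerivAt (·⁻¹) (-(x ^ 2)⁻¹) x :=
    fun x hx => hasDerivAt_inv (pos_of_mem_uIcc ha hb hx).ne'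
  have hv : ∀ x ∈ [[a, b]], HasDerivAt (fun y => sin (l * y) / l) (cos (l * x)) x := by
    intro x _
    simpa [hl.ne'] using (((hasDerivAt_id' x).const_mul l).sin).div_const l
  have hu' : IntervalIntegrable (fun x : ℝ => -(x ^ 2)⁻¹) volume a b :=
    (ContinuousOn.neg (continuousOn_inv₀.comp (continuousOn_pow 2)
      fun x hx => pow_ne_zero 2 (pos_of_mem_uIcc ha hb hx).ne')).intervalIntegrable
  have hibp := intervalIntegral.integral_mul_deriv_eq_deriv_mul hu hv hu'
    ((by fun_prop : Continuous fun x => cos (l * x)).intervalIntegrable a b)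
  have hbound : ∀ y t : ℝ, |y * (sin t / l)| ≤ |y| / l := fun y t => by
    rw [abs_mul, abs_div, abs_of_pos hl, mul_div_assoc']
    exact div_le_div_of_nonneg_right
      (mul_le_of_le_one_right (abs_nonneg y) (abs_sin_le_one t)) hl.le
  have hrem : |∫ x in a..b, -(x ^ 2)⁻¹ * (sin (l * x) / l)| ≤ (a⁻¹ - b⁻¹) / l :=
    calc _ ≤ ∫ x in a..b, -(-(x ^ 2)⁻¹) / l :=
          intervalIntegral.norm_integral_le_of_norm_le
            (f := fun x => -(x ^ 2)⁻¹ * (sin (l * x) / l)) hab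
            (ae_of_all _ fun x hx => by
              rw [neg_neg, Real.norm_eq_abs]
              have := hbound (-(x ^ 2)⁻¹) (l * x)
              rwa [abs_neg, abs_inv, abs_of_pos (pow_pos (ha.trans hx.1) 2)] at this)
            (hu'.neg.div_const l)
      _ = (a⁻¹ - b⁻¹) / l := by
          rw [intervalIntegral.integral_div, intervalIntegral.integral_neg,
            intervalIntegral.integral_eq_sub_of_hasDerivAt hu hu']
          ring
  rw [show (fun x => cos (l * x) / x) = fun x => x⁻¹ * cos (l * x) by funext x; ring, hibp]
  calc _ ≤ |b⁻¹ * (sin (l * b) / l)| + |a⁻¹ * (sin (l * a) / l)|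
          + |∫ x in a..b, -(x ^ 2)⁻¹ * (sin (l * x) / l)| :=
        (abs_sub _ _).trans (add_le_add_left (abs_sub _ _) _)
    _ ≤ b⁻¹ / l + a⁻¹ / l + (a⁻¹ - b⁻¹) / l := by
        gcongr
        · simpa [abs_of_pos hb] using hbound b⁻¹ (l * b)
        · simpa [abs_of_pos ha] using hbound a⁻¹ (l * a)
    _ = 2 / (l * a) := by field_simp; ring

lemma log_div_sub_le_integral_sin_sq_mul_div (ha : 0 < a) (hab : a ≤ b) {l : ℝ} (hl : 0 < l) :
    log (b / a) / 2 - 1 / (2 * l * a) ≤ ∫ x in a..b, sin (l * x) ^ 2 / x := by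
  have hcos := (le_abs_self _).trans
    (abs_integral_cos_mul_div_le ha hab (by positivity : 0 < 2 * l))
  rw [integral_sin_sq_mul_div ha (ha.trans_le hab)]
  have : 2 / (2 * l * a) = 2 * (1 / (2 * l * a)) := by ring
  linarith

end PositiveInterval

lemma le_sq_norm_exp_mul_sub_exp_mul_div {A B : ℝ → ℂ} {c : ℂ} {CA CB : ℝ}
    (hA : ∀ ξ, ‖A ξ - c‖ ≤ CA * |ξ|) (hB : ∀ ξ, ‖B ξ - c‖ ≤ CB * |ξ|) (θ : ℝ) {ξ : ℝ}
    (hξ : 0 < ξ) :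
    4 * ‖c‖ ^ 2 * (sin θ ^ 2 / ξ) - 4 * ‖c‖ * (CA + CB) ≤
      ‖Complex.exp (-θ * Complex.I) * A ξ - Complex.exp (θ * Complex.I) * B (-ξ)‖ ^ 2 / ξ := by
  have hε : ‖A ξ - c‖ + ‖B (-ξ) - c‖ ≤ (CA + CB) * ξ := by
    have := add_le_add (hA ξ) (hB (-ξ))
    rwa [abs_neg, abs_of_pos hξ, ← add_mul] at this
  rw [le_div_iff₀ hξ]
  calc _ = 4 * ‖c‖ ^ 2 * sin θ ^ 2 - 4 * ‖c‖ * ((CA + CB) * ξ) := by field_simp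
    _ ≤ _ := le_sq_norm_exp_mul_sub_exp_mul θ _ hε

theorem stmt_14_general (A B : ℝ → ℂ) (hA : Continuous A) (hB : Continuous B)
    (c : ℂ) (hA0 : A 0 = c) (hB0 : B 0 = c)
    (CA : ℝ) (hAlip : ∀ ξ : ℝ, ‖A ξ - A 0‖ ≤ CA * |ξ|)
    (CB : ℝ) (hBlip : ∀ ξ : ℝ, ‖B ξ - B 0‖ ≤ CB * |ξ|) :
    ∃ δ > (0:ℝ), ∃ K > (0:ℝ), ∀ T : ℝ, T ≥ K →
      (∫ ξ in (K/T)..δ,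
        ‖Complex.exp (-(2*π*T*ξ : ℝ) * Complex.I) * A ξ
          - Complex.exp ((2*π*T*ξ : ℝ) * Complex.I) * B (-ξ)‖^2 / ξ)
      ≥ (1/2) * ‖c‖^2 * Real.log T - K := by
  rw [hA0] at hAlip
  rw [hB0] at hBlip
  have hE : 0 ≤ 4 * ‖c‖ * (CA + CB) := by
    have hCA : 0 ≤ CA := by simpa using (norm_nonneg _).trans (hAlip 1)
    have hCB : 0 ≤ CB := by simpa using (norm_nonneg _).trans (hBlip 1)
    positivity
  obtain ⟨K, hK1, hK⟩ := exists_mul_log_add_le (‖c‖ ^ 2 / 2) (2 * ‖c‖ ^ 2 + 4 * ‖c‖ * (CA + CB))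
  refine ⟨1, one_pos, K, by linarith, fun T hT => ?_⟩
  have hT0 : 0 < T := by linarith
  have ha : 0 < K / T := by positivity
  have ha1 : K / T ≤ 1 := (div_le_one hT0).2 hT
  have hsinInt := (intervalIntegrable_div_of_pos (f := fun ξ => sin (2 * π * T * ξ) ^ 2)
    (by fun_prop) ha one_pos).const_mul (4 * ‖c‖ ^ 2)
  have hmain := intervalIntegral.integral_mono_on ha1
    (hsinInt.sub intervalIntegrable_const) (intervalIntegrable_div_of_pos (by fun_prop) ha one_pos)
    fun ξ hξ => le_sq_norm_exp_mul_sub_exp_mul_div hAlip hBlip (2 * π * T * ξ) (ha.trans_le hξ.1)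
  rw [intervalIntegral.integral_sub hsinInt intervalIntegrable_const,
    intervalIntegral.integral_const_mul, intervalIntegral.integral_const, smul_eq_mul] at hmain
  have hsin := log_div_sub_le_integral_sin_sq_mul_div ha ha1 (by positivity : 0 < 2 * π * T)
  rw [one_div_div, log_div hT0.ne' (by positivity),
    show 2 * (2 * π * T) * (K / T) = 4 * π * K by field_simp; ring] at hsin
  have hπK : 1 / (4 * π * K) ≤ 1 / 2 := by
    rw [div_le_div_iff₀ (by positivity) two_pos]
    nlinarith [pi_gt_three]
  have hlog : log K ≤ log T := log_le_log (by linarith) hT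
  nlinarith [mul_le_mul_of_nonneg_left hsin (by positivity : 0 ≤ 4 * ‖c‖ ^ 2),
    mul_le_mul_of_nonneg_left hlog (sq_nonneg ‖c‖), mul_nonneg hE ha.le]

/-- The key Fourier-side logarithmic lower bound. -/
theorem stmt_14 (A B : ℝ → ℂ) (hA : Continuous A) (hB : Continuous B)
    (c : ℂ) (hc : c ≠ 0) (hA0 : A 0 = c) (hB0 : B 0 = c)
    (CA : ℝ) (hAlip : ∀ ξ : ℝ, ‖A ξ - A 0‖ ≤ CA * |ξ|)
    (CB : ℝ) (hBlip : ∀ ξ : ℝ, ‖B ξ - B 0‖ ≤ CB * |ξ|) :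
    ∃ δ > (0:ℝ), ∃ K > (0:ℝ), ∀ T : ℝ, T ≥ K →
      (∫ ξ in (K/T)..δ,
        ‖Complex.exp (-(2*π*T*ξ : ℝ) * Complex.I) * A ξ
          - Complex.exp ((2*π*T*ξ : ℝ) * Complex.I) * B (-ξ)‖^2 / ξ)
      ≥ (1/2) * ‖c‖^2 * Real.log T - K :=
  stmt_14_general A B hA hB c hA0 hB0 CA hAlip CB hBlip
end
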